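/- If elements V_1, ..., V_n of a free group F of rank n generate F, then the homomorphism from F to F determined by sending the i-th free generator c_i to V_i is an automorphism of F. -/

import Mathlib

/-!
Free groups are residually finite: given a word `L` for `w ≠ 1`, let `S` be the finite set of
elements represented by the suffixes of `L`. Each generator `a` acts on `S` by a permutation that
agrees with left multiplication by `a` wherever the product stays in `S`; reading `L` from the
right, the resulting action carries `1` along the suffixes to `w`, so `w` survives in a finite
quotient. A finitely generated residually finite group is Hopfian, since precomposition with a
surjective endomorphism is a bijection of the finite set of homomorphisms to each finite quotient.
-/

open Function

section LeftMulPerm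

variable {G : Type*} [Group G] (S : Set G) [Finite S]

open Classical in
noncomputable def Set.leftMulPerm (g : G) : Equiv.Perm S :=
  Equiv.extendSubtype (p := fun s : S => g * s ∈ S) (q := fun s : S => g⁻¹ * s ∈ S)
    { toFun := fun s => ⟨⟨g * s, s.2⟩, by simp⟩
      invFun := fun t => ⟨⟨g⁻¹ * t, t.2⟩, by simp⟩
      left_inv := fun s => by simp
      right_inv := fun t => by simp }

theorem Set.leftMulPerm_apply {g : G} {s : S} (h : g * s ∈ S) :
    (S.leftMulPerm g s : G) = g * s := by
  classical
  exact congrArg Subtype.val (Equiv.extendSubtype_apply_of_mem (p := fun s : S => g * s ∈ S) _ _ h)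

theorem Set.leftMulPerm_inv_apply {g : G} {s : S} (h : g⁻¹ * s ∈ S) :
    ((S.leftMulPerm g)⁻¹ s : G) = g⁻¹ * s := by
  have hs : S.leftMulPerm g ⟨g⁻¹ * s, h⟩ = s :=
    Subtype.ext (by simpa using S.leftMulPerm_apply (g := g) (s := ⟨_, h⟩) (by simp))
  rw [Equiv.Perm.inv_eq_iff_eq.mpr hs.symm]

end LeftMulPerm

namespace FreeGroup

variable {α : Type*}

theorem lift_leftMulPerm_mk_apply (S : Set (FreeGroup α)) [Finite S] (L : List (α × Bool))
    (hL : ∀ t, t <:+ L → mk t ∈ S) (p : S) (hp : (p : FreeGroup α) = 1) :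
    ((lift fun a => S.leftMulPerm (of a)) (mk L) p : FreeGroup α) = mk L := by
  induction L with
  | nil => exact hp
  | cons x t ih =>
    obtain ⟨a, b⟩ := x
    have hx : mk [(a, b)] * mk t ∈ S := by rw [mul_mk]; exact hL _ (List.suffix_refl _)
    have ht : mk t ∈ S := hL t (List.suffix_cons _ _)
    have ih' : (lift fun a => S.leftMulPerm (of a)) (mk t) p = ⟨mk t, ht⟩ :=
      Subtype.ext (ih fun u hu => hL u (hu.trans (List.suffix_cons _ _)))
    rw [← List.singleton_append, ← mul_mk, MonoidHom.map_mul, Equiv.Perm.mul_apply, ih']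
    cases b
    · have hinv : mk [(a, false)] = (of a)⁻¹ := by simp [of, inv_mk, invRev]
      rw [hinv] at hx ⊢
      simpa using S.leftMulPerm_inv_apply hx
    · exact S.leftMulPerm_apply hx

instance residuallyFinite : Group.ResiduallyFinite (FreeGroup α) := by
  classical
  refine Group.residuallyFinite_iff_exists_finiteIndex.mpr fun w hw => ?_
  let S : Set (FreeGroup α) := ↑(w.toWord.tails.map mk).toFinset
  have hS : ∀ t, t <:+ w.toWord → mk t ∈ S := fun t ht => by simpa [S] using ⟨t, ht, rfl⟩
  let f := lift fun a => S.leftMulPerm (of a)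
  refine ⟨f.ker, Subgroup.finiteIndex_ker f, fun hker => hw ?_⟩
  have hw1 := lift_leftMulPerm_mk_apply S w.toWord hS ⟨1, hS [] List.nil_suffix⟩ rfl
  rw [mk_toWord, f.mem_ker.mp hker] at hw1
  exact hw1.symm

end FreeGroup

instance MonoidHom.finite_of_fg {G M : Type*} [Group G] [Group.FG G] [Monoid M] [Finite M] :
    Finite (G →* M) := by
  obtain ⟨S, hS, hfin⟩ := Group.fg_iff.mp ‹_›
  have := hfin.to_subtype
  exact Finite.of_injective (fun (f : G →* M) (x : S) => f x) fun f g hfg =>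
    MonoidHom.eq_of_eqOn_dense hS fun x hx => congrFun hfg ⟨x, hx⟩

theorem MonoidHom.injective_of_surjective_of_residuallyFinite {G : Type*} [Group G] [Group.FG G]
    [Group.ResiduallyFinite G] {φ : G →* G} (hφ : Surjective φ) : Injective φ := by
  refine (injective_iff_map_eq_one φ).mpr fun g hg => by_contra fun hne => ?_
  obtain ⟨H, hgH⟩ := Group.exists_finiteIndexNormalSubgroup_notMem g hne
  have hcomp : Surjective fun ψ : G →* G ⧸ H.toSubgroup => ψ.comp φ :=
    Finite.surjective_of_injective fun _ _ => (MonoidHom.cancel_right hφ).mp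
  obtain ⟨ψ, hψ⟩ := hcomp (QuotientGroup.mk' H.toSubgroup)
  have hgq : (g : G ⧸ H.toSubgroup) = 1 := by
    rw [← QuotientGroup.mk'_apply, ← hψ, MonoidHom.comp_apply, hg, map_one]
  exact hgH ((QuotientGroup.eq_one_iff g).mp hgq)

theorem generators_to_basis_automorphism (n : ℕ) (V : Fin n → FreeGroup (Fin n))
    (hV : Subgroup.closure (Set.range V) = ⊤) :
    Function.Bijective (FreeGroup.lift V : FreeGroup (Fin n) →* FreeGroup (Fin n)) := by
  have hsurj : Surjective (FreeGroup.lift V) := by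
    rw [← MonoidHom.range_eq_top, FreeGroup.range_lift_eq_closure, hV]
  exact ⟨MonoidHom.injective_of_surjective_of_residuallyFinite hsurj, hsurj⟩
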